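/- Let u₁,…,uₙ and v₁,…,vₙ be real numbers, and let F_u, F_v denote their empirical distribution functions: F_u(t) = (1/n)·#{i : uᵢ ≤ t}. Then for every τ > 0, sup over t of |F_u(t) − F_v(t)| ≤ (1/n)·#{i : |uᵢ − vᵢ| > τ} + sup over t of (F_u(t+τ) − F_u(t−τ)). -/

import Mathlib

open Finset

/-!
If `|uᵢ - vᵢ| ≤ τ`, then `vᵢ ≤ t` forces `uᵢ ≤ t + τ` and `uᵢ ≤ t - τ` forces `vᵢ ≤ t`; so, up to the
far pairs, `F_v(t)` is squeezed between `F_u(t - τ)` and `F_u(t + τ)`, and `F_u(t)` lies in the same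
window by monotonicity. Hence `|F_u(t) - F_v(t)|` is at most the fraction of far pairs plus the
`F_u`-mass of `(t - τ, t + τ]`.
-/

section

variable {ι : Type*} (s : Finset ι) (u v : ι → ℝ)

theorem card_filter_le_mono {a b : ℝ} (hab : a ≤ b) :
    #{i ∈ s | u i ≤ a} ≤ #{i ∈ s | u i ≤ b} :=
  card_le_card <| monotone_filter_right s fun _ _ h => h.trans hab

theorem card_filter_le_le_card_far_add [DecidableEq ι] (τ t : ℝ) :
    #{i ∈ s | v i ≤ t} ≤ #{i ∈ s | τ < |u i - v i|} + #{i ∈ s | u i ≤ t + τ} := by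
  refine (card_le_card fun i hi => ?_).trans (card_union_le _ _)
  simp only [mem_union, mem_filter] at hi ⊢
  by_cases hfar : τ < |u i - v i|
  · exact Or.inl ⟨hi.1, hfar⟩
  · have hclose := (abs_le.mp (not_lt.mp hfar)).2
    exact Or.inr ⟨hi.1, by linarith [hi.2]⟩

theorem abs_card_filter_le_sub_le [DecidableEq ι] {τ : ℝ} (hτ : 0 ≤ τ) (t : ℝ) :
    |(#{i ∈ s | u i ≤ t} : ℝ) - #{i ∈ s | v i ≤ t}| ≤
      #{i ∈ s | τ < |u i - v i|} + ((#{i ∈ s | u i ≤ t + τ} : ℝ) - #{i ∈ s | u i ≤ t - τ}) := by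
  have hv_upper : (#{i ∈ s | v i ≤ t} : ℝ) ≤ #{i ∈ s | τ < |u i - v i|} + #{i ∈ s | u i ≤ t + τ} := by
    exact_mod_cast card_filter_le_le_card_far_add s u v τ t
  have hv_lower : (#{i ∈ s | u i ≤ t - τ} : ℝ) ≤ #{i ∈ s | τ < |u i - v i|} + #{i ∈ s | v i ≤ t} := by
    have := card_filter_le_le_card_far_add s v u τ (t - τ)
    simp only [abs_sub_comm (v _), sub_add_cancel] at this
    exact_mod_cast this
  have hu_lower : (#{i ∈ s | u i ≤ t - τ} : ℝ) ≤ #{i ∈ s | u i ≤ t} := by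
    exact_mod_cast card_filter_le_mono s u (sub_le_self t hτ)
  have hu_upper : (#{i ∈ s | u i ≤ t} : ℝ) ≤ #{i ∈ s | u i ≤ t + τ} := by
    exact_mod_cast card_filter_le_mono s u (le_add_of_nonneg_right hτ)
  rw [abs_le]
  constructor <;> linarith

theorem bddAbove_range_card_window_div (n τ : ℝ) (hn : 0 ≤ n) :
    BddAbove (Set.range fun t : ℝ =>
      (#{i ∈ s | u i ≤ t + τ} : ℝ) / n - #{i ∈ s | u i ≤ t - τ} / n) := by
  refine ⟨#s / n, ?_⟩
  rintro _ ⟨t, rfl⟩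
  have hle : (#{i ∈ s | u i ≤ t + τ} : ℝ) / n ≤ #s / n := by
    gcongr
    exact filter_subset _ s
  have hnonneg : 0 ≤ (#{i ∈ s | u i ≤ t - τ} : ℝ) / n := by positivity
  linarith

end

theorem empirical_cdf_comparison_general
    (n : ℕ) (u v : Fin n → ℝ) (τ : ℝ) (hτ : 0 < τ) :
    (⨆ t : ℝ, |((Finset.univ.filter (fun i => u i ≤ t)).card : ℝ) / n
        - ((Finset.univ.filter (fun i => v i ≤ t)).card : ℝ) / n|)
      ≤ ((Finset.univ.filter (fun i => τ < |u i - v i|)).card : ℝ) / n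
        + ⨆ t : ℝ, (((Finset.univ.filter (fun i => u i ≤ t + τ)).card : ℝ) / n
            - ((Finset.univ.filter (fun i => u i ≤ t - τ)).card : ℝ) / n) := by
  have hn : (0 : ℝ) ≤ n := n.cast_nonneg
  refine ciSup_le fun t => ?_
  calc _ = |(#{i | u i ≤ t} : ℝ) - #{i | v i ≤ t}| / n := by
        rw [← sub_div, abs_div, Nat.abs_cast]
    _ ≤ (#{i | τ < |u i - v i|} + ((#{i | u i ≤ t + τ} : ℝ) - #{i | u i ≤ t - τ})) / n := by
        gcongr
        exact abs_card_filter_le_sub_le univ u v hτ.le t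
    _ = #{i | τ < |u i - v i|} / n + ((#{i | u i ≤ t + τ} : ℝ) / n - #{i | u i ≤ t - τ} / n) := by
        ring
    _ ≤ _ := by
        gcongr
        exact le_ciSup (bddAbove_range_card_window_div univ u n τ hn) t

/-- Kolmogorov distance between two empirical CDFs is bounded by the
fraction of far pairs plus the maximal empirical mass of a 2τ window. -/
theorem empirical_cdf_comparison
    (n : ℕ) (hn : 1 ≤ n) (u v : Fin n → ℝ) (τ : ℝ) (hτ : 0 < τ) :
    (⨆ t : ℝ, |((Finset.univ.filter (fun i => u i ≤ t)).card : ℝ) / n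
        - ((Finset.univ.filter (fun i => v i ≤ t)).card : ℝ) / n|)
      ≤ ((Finset.univ.filter (fun i => τ < |u i - v i|)).card : ℝ) / n
        + ⨆ t : ℝ, (((Finset.univ.filter (fun i => u i ≤ t + τ)).card : ℝ) / n
            - ((Finset.univ.filter (fun i => u i ≤ t - τ)).card : ℝ) / n) :=
  empirical_cdf_comparison_general n u v τ hτ
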